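/- For a nontrivial real Banach space X: X has the strong diameter 2 property if and only if the dual X* is octahedral. -/

import Mathlib

open Metric Set

noncomputable section

/-- A slice of the closed unit ball determined by `f ∈ S_{X*}` and `α > 0` is
`{x ∈ B_X : f x > 1 - α}`.  `X` has the local diameter 2 property if every slice
of `B_X` has diameter 2. -/
def LocalDiameterTwoProp (X : Type*) [NormedAddCommGroup X] [NormedSpace ℝ X] : Prop :=
  ∀ f : X →L[ℝ] ℝ, ‖f‖ = 1 → ∀ α : ℝ, 0 < α →
    Metric.diam {x : X | ‖x‖ ≤ 1 ∧ 1 - α < f x} = 2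

/-- `X` has the diameter 2 property if every nonempty relatively weakly open
subset of `B_X` has diameter 2. -/
def DiameterTwoProp (X : Type*) [NormedAddCommGroup X] [NormedSpace ℝ X] : Prop :=
  ∀ U : Set (WeakSpace ℝ X), IsOpen U →
    {x : X | ‖x‖ ≤ 1 ∧ toWeakSpace ℝ X x ∈ U}.Nonempty →
    Metric.diam {x : X | ‖x‖ ≤ 1 ∧ toWeakSpace ℝ X x ∈ U} = 2

/-- `X` has the strong diameter 2 property if every convex combination of slices
of `B_X` has diameter 2. -/
def StrongDiameterTwoProp (X : Type*) [NormedAddCommGroup X] [NormedSpace ℝ X] : Prop :=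
  ∀ (n : ℕ) (lam : Fin n → ℝ) (f : Fin n → X →L[ℝ] ℝ) (α : Fin n → ℝ),
    (∀ i, 0 ≤ lam i) → (∑ i, lam i) = 1 → (∀ i, ‖f i‖ = 1) → (∀ i, 0 < α i) →
    Metric.diam {x : X | ∃ g : Fin n → X,
      (∀ i, ‖g i‖ ≤ 1 ∧ 1 - α i < f i (g i)) ∧ x = ∑ i, lam i • g i} = 2

/-- The dual of `X` has the weak* local diameter 2 property if every weak* slice
`{f ∈ B_{X*} : f x > 1 - α}` (with `x ∈ S_X`, `α > 0`) has diameter 2. -/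
def WStarLocalDiameterTwoProp (X : Type*) [NormedAddCommGroup X] [NormedSpace ℝ X] : Prop :=
  ∀ x : X, ‖x‖ = 1 → ∀ α : ℝ, 0 < α →
    Metric.diam {f : X →L[ℝ] ℝ | ‖f‖ ≤ 1 ∧ 1 - α < f x} = 2

/-- The dual of `X` has the weak* diameter 2 property if every nonempty relatively
weak* open subset of `B_{X*}` has diameter 2. -/
def WStarDiameterTwoProp (X : Type*) [NormedAddCommGroup X] [NormedSpace ℝ X] : Prop :=
  ∀ U : Set (WeakDual ℝ X), IsOpen U →
    {f : X →L[ℝ] ℝ | ‖f‖ ≤ 1 ∧ StrongDual.toWeakDual f ∈ U}.Nonempty →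
    Metric.diam {f : X →L[ℝ] ℝ | ‖f‖ ≤ 1 ∧ StrongDual.toWeakDual f ∈ U} = 2

/-- The dual of `X` has the weak* strong diameter 2 property if every convex
combination of weak* slices of `B_{X*}` has diameter 2. -/
def WStarStrongDiameterTwoProp (X : Type*) [NormedAddCommGroup X] [NormedSpace ℝ X] : Prop :=
  ∀ (n : ℕ) (lam : Fin n → ℝ) (x : Fin n → X) (α : Fin n → ℝ),
    (∀ i, 0 ≤ lam i) → (∑ i, lam i) = 1 → (∀ i, ‖x i‖ = 1) → (∀ i, 0 < α i) →
    Metric.diam {f : X →L[ℝ] ℝ | ∃ g : Fin n → (X →L[ℝ] ℝ),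
      (∀ i, ‖g i‖ ≤ 1 ∧ 1 - α i < g i (x i)) ∧ f = ∑ i, lam i • g i} = 2

/-- `X` is locally octahedral. -/
def LocallyOctahedral (X : Type*) [NormedAddCommGroup X] [NormedSpace ℝ X] : Prop :=
  ∀ x : X, ∀ ε : ℝ, 0 < ε → ∃ y : X, ‖y‖ = 1 ∧
    ∀ s : ℝ, (1 - ε) * (|s| * ‖x‖ + ‖y‖) ≤ ‖s • x + y‖

/-- `X` is weakly octahedral. -/
def WeaklyOctahedral (X : Type*) [NormedAddCommGroup X] [NormedSpace ℝ X] : Prop :=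
  ∀ E : Subspace ℝ X, FiniteDimensional ℝ E → ∀ f : X →L[ℝ] ℝ, ‖f‖ ≤ 1 →
    ∀ ε : ℝ, 0 < ε → ∃ y : X, ‖y‖ = 1 ∧
      ∀ x ∈ E, (1 - ε) * (|f x| + ‖y‖) ≤ ‖x + y‖

/-- The norm on `X` is octahedral. -/
def Octahedral (X : Type*) [NormedAddCommGroup X] [NormedSpace ℝ X] : Prop :=
  ∀ E : Subspace ℝ X, FiniteDimensional ℝ E → ∀ ε : ℝ, 0 < ε →
    ∃ y : X, ‖y‖ = 1 ∧ ∀ x ∈ E, (1 - ε) * (‖x‖ + ‖y‖) ≤ ‖x + y‖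


/-!
If `X*` is octahedral, then for finitely many unit functionals `fᵢ` there is a unit `g` with
`‖±fᵢ + g‖` close to `2`; each slice `S(fᵢ, α)` then contains points `yᵢ`, `zᵢ` with `g yᵢ ≈ 1`
and `g zᵢ ≈ -1`, so `g` separates the convex combinations `∑ λᵢ yᵢ` and `∑ λᵢ zᵢ` by almost `2`.

Conversely, take a finite net `f₁, …, fₙ` of the unit sphere of a finite-dimensional `E ⊆ X*` and
two points `∑ yᵢ / n`, `∑ wᵢ / n` of the average of the slices `S(fᵢ, δ)` at distance almost `2`.
A norming functional `g` of their difference is close to `1` at the first one, hence at every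
`yᵢ`, so `‖fᵢ + g‖ ≥ (fᵢ + g) yᵢ ≈ 2`. Passing from the net to all of `E` costs only the mesh,
since `‖u + g‖ ≥ 2 - δ` for unit `u`, `g` implies `‖t • u + g‖ ≥ (1 - δ) (t + 1)` for `t ≥ 0`.
-/

open Filter Topology

section Metric

variable {α : Type*} [PseudoMetricSpace α]

lemma exists_lt_dist_of_lt_diam {S : Set α} {r : ℝ} (hr : 0 ≤ r) (h : r < diam S) :
    ∃ a ∈ S, ∃ b ∈ S, r < dist a b := by
  by_contra! hS
  exact (diam_le_of_forall_dist_le hr hS).not_gt h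

lemma diam_eq_of_subset_closedBall {S : Set α} {c : α} {r : ℝ} (hS : S ⊆ closedBall c r)
    (h : ∀ η > 0, ∃ a ∈ S, ∃ b ∈ S, 2 * r - η < dist a b) : diam S = 2 * r := by
  obtain ⟨a, ha, -⟩ := h 1 one_pos
  have hr : 0 ≤ r := dist_nonneg.trans (mem_closedBall.1 (hS ha))
  refine le_antisymm ((diam_mono hS isBounded_closedBall).trans (diam_closedBall hr)) ?_
  refine le_of_forall_pos_le_add fun η hη => ?_
  obtain ⟨a, ha, b, hb, hab⟩ := h η hη
  linarith [dist_le_diam_of_mem (isBounded_closedBall.subset hS) ha hb]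

end Metric

lemma exists_pos_forall_lt {ι : Type*} [Finite ι] {α : ι → ℝ} (hα : ∀ i, 0 < α i) :
    ∃ ε > 0, ∀ i, ε < α i :=
  ((eventually_all.2 fun i => (eventually_lt_nhds (hα i)).filter_mono nhdsWithin_le_nhds).and
    (self_mem_nhdsWithin : ∀ᶠ ε in 𝓝[>] (0 : ℝ), 0 < ε)).exists.imp fun _ h => ⟨h.2, h.1⟩

lemma mul_one_sub_le_one_sub_sum_mul {ι : Type*} [Fintype ι] {w a : ι → ℝ}
    (hw : ∀ i, 0 ≤ w i) (hw₁ : ∑ i, w i = 1) (ha : ∀ i, a i ≤ 1) (i : ι) :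
    w i * (1 - a i) ≤ 1 - ∑ j, w j * a j := by
  have : 1 - ∑ j, w j * a j = ∑ j, w j * (1 - a j) := by
    simp only [mul_sub, mul_one, Finset.sum_sub_distrib, hw₁]
  rw [this]
  exact Finset.single_le_sum (fun j _ => mul_nonneg (hw j) (sub_nonneg.2 (ha j)))
    (Finset.mem_univ i)

section Normed

variable {E : Type*} [SeminormedAddCommGroup E] [NormedSpace ℝ E]

lemma norm_sum_smul_le_one {ι : Type*} [Fintype ι] {w : ι → ℝ} {x : ι → E}
    (hw : ∀ i, 0 ≤ w i) (hw₁ : ∑ i, w i = 1) (hx : ∀ i, ‖x i‖ ≤ 1) : ‖∑ i, w i • x i‖ ≤ 1 := by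
  simpa using (convex_closedBall (0 : E) 1).sum_mem (fun i _ => hw i) hw₁
    fun i _ => by simpa using hx i

lemma one_sub_mul_le_norm_smul_add {u g : E} {δ t : ℝ} (hu : ‖u‖ ≤ 1) (hg : ‖g‖ ≤ 1)
    (ht : 0 ≤ t) (h : 2 - δ ≤ ‖u + g‖) : (1 - δ) * (t + 1) ≤ ‖t • u + g‖ := by
  have hδ : 0 ≤ δ := by linarith [norm_add_le u g]
  rcases le_total 1 t with h1 | h1
  · calc (1 - δ) * (t + 1) ≤ t * ‖u + g‖ - (t - 1) * ‖g‖ := by nlinarith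
      _ = ‖t • (u + g)‖ - ‖(t - 1) • g‖ := by
        rw [norm_smul, norm_smul, Real.norm_of_nonneg ht, Real.norm_of_nonneg (by linarith)]
      _ ≤ ‖t • (u + g) - (t - 1) • g‖ := norm_sub_norm_le _ _
      _ = ‖t • u + g‖ := by congr 1; module
  · calc (1 - δ) * (t + 1) ≤ ‖u + g‖ - (1 - t) * ‖u‖ := by nlinarith
      _ = ‖u + g‖ - ‖(1 - t) • u‖ := by rw [norm_smul, Real.norm_of_nonneg (by linarith)]
      _ ≤ ‖u + g - (1 - t) • u‖ := norm_sub_norm_le _ _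
      _ = ‖t • u + g‖ := by congr 1; module

end Normed

theorem octahedral_of_forall_exists_lt_norm_add {Z : Type*} [NormedAddCommGroup Z]
    [NormedSpace ℝ Z]
    (h : ∀ (n : ℕ) (u : Fin n → Z), (∀ i, ‖u i‖ = 1) → ∀ δ > 0,
      ∃ g : Z, ‖g‖ = 1 ∧ ∀ i, 2 - δ < ‖u i + g‖) :
    Octahedral Z := by
  intro E _ ε hε
  obtain ⟨t, htS, hcover⟩ := (isCompact_sphere (0 : E) 1).elim_nhds_subcover
    (fun c => ball c (ε / 2)) fun c _ => ball_mem_nhds c (half_pos hε)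
  obtain ⟨g, hg, hgt⟩ := h t.card (fun i => ((t.equivFin.symm i : E) : Z))
    (fun i => by simpa using htS _ (t.equivFin.symm i).2) (ε / 2) (half_pos hε)
  have hsphere : ∀ v ∈ E, ‖v‖ = 1 → 2 - ε ≤ ‖v + g‖ := by
    intro v hv hv₁
    obtain ⟨c, hct, hvc⟩ := mem_iUnion₂.1 (hcover (show (⟨v, hv⟩ : E) ∈ sphere 0 1 by simpa))
    have hcg : 2 - ε / 2 < ‖(c : Z) + g‖ := by simpa using hgt (t.equivFin ⟨c, hct⟩)
    have hvc' : ‖(c : Z) - v‖ < ε / 2 := by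
      rw [← dist_eq_norm, dist_comm]; exact mem_ball.1 hvc
    calc 2 - ε ≤ ‖(c : Z) + g‖ - ‖(c : Z) - v‖ := by linarith
      _ ≤ ‖((c : Z) + g) - ((c : Z) - v)‖ := norm_sub_norm_le _ _
      _ = ‖v + g‖ := by congr 1; abel
  refine ⟨g, hg, fun x hx => ?_⟩
  rcases eq_or_ne x 0 with rfl | hx₀
  · simp only [norm_zero, zero_add, hg]
    linarith
  have hx₁ : ‖‖x‖⁻¹ • x‖ = 1 := by
    rw [norm_smul, norm_inv, norm_norm, inv_mul_cancel₀ (norm_ne_zero_iff.2 hx₀)]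
  have := one_sub_mul_le_norm_smul_add hx₁.le hg.le (norm_nonneg x)
    (hsphere _ (E.smul_mem _ hx) hx₁)
  rw [hg]
  rwa [smul_inv_smul₀ (norm_ne_zero_iff.2 hx₀)] at this

section Dual

variable {X : Type*} [NormedAddCommGroup X] [NormedSpace ℝ X]

lemma StrongDual.apply_le_norm (φ : StrongDual ℝ X) {x : X} (hx : ‖x‖ ≤ 1) : φ x ≤ ‖φ‖ :=
  (Real.le_norm_self _).trans (φ.unit_le_opNorm x hx)

lemma StrongDual.exists_norm_le_one_lt_apply (φ : StrongDual ℝ X) {r : ℝ} (hr : r < ‖φ‖) :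
    ∃ x : X, ‖x‖ ≤ 1 ∧ r < φ x := by
  obtain ⟨x, hx, hrx⟩ := φ.exists_lt_apply_of_lt_opNorm hr
  rcases le_or_gt 0 (φ x) with hφx | hφx
  · exact ⟨x, hx.le, by rwa [Real.norm_of_nonneg hφx] at hrx⟩
  · refine ⟨-x, by simpa using hx.le, ?_⟩
    rw [Real.norm_of_nonpos hφx.le] at hrx
    simpa using hrx

lemma StrongDual.exists_lt_apply_and_lt_apply {f g : StrongDual ℝ X} (hf : ‖f‖ ≤ 1)
    (hg : ‖g‖ ≤ 1) {δ : ℝ} (h : 2 - δ < ‖f + g‖) :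
    ∃ x : X, ‖x‖ ≤ 1 ∧ 1 - δ < f x ∧ 1 - δ < g x := by
  obtain ⟨x, hx, hfgx⟩ := (f + g).exists_norm_le_one_lt_apply h
  have hfx := (f.apply_le_norm hx).trans hf
  have hgx := (g.apply_le_norm hx).trans hg
  rw [add_apply] at hfgx
  exact ⟨x, hx, by linarith, by linarith⟩

theorem StrongDiameterTwoProp.of_octahedral_dual (h : Octahedral (StrongDual ℝ X)) :
    StrongDiameterTwoProp X := by
  intro n lam f α hlam hsum hf hα
  refine (diam_eq_of_subset_closedBall (c := 0) (r := 1) ?_ fun η hη => ?_).trans (mul_one 2)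
  · rintro _ ⟨y, hy, rfl⟩
    simpa using norm_sum_smul_le_one hlam hsum fun i => (hy i).1
  obtain ⟨ε, hε, hεα⟩ := exists_pos_forall_lt hα
  set δ := min ε (η / 4)
  have hδ : 0 < δ := lt_min hε (by positivity)
  have hδα : ∀ i, δ < α i := fun i => (min_le_left _ _).trans_lt (hεα i)
  have hδη : δ ≤ η / 4 := min_le_right _ _
  set F := Submodule.span ℝ (range f)
  obtain ⟨g, hg, hgF⟩ := h F (FiniteDimensional.span_of_finite ℝ (finite_range f)) (δ / 4)
    (by positivity)
  have hfar : ∀ φ ∈ F, ‖φ‖ = 1 → 2 - δ < ‖φ + g‖ := fun φ hφ hφ₁ => by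
    have := hgF φ hφ
    rw [hφ₁, hg] at this
    linarith
  have hfF : ∀ i, f i ∈ F := fun i => Submodule.subset_span (mem_range_self i)
  have hy : ∀ i, ∃ y : X, ‖y‖ ≤ 1 ∧ 1 - δ < f i y ∧ 1 - δ < g y := fun i =>
    StrongDual.exists_lt_apply_and_lt_apply (hf i).le hg.le (hfar _ (hfF i) (hf i))
  have hz : ∀ i, ∃ z : X, ‖z‖ ≤ 1 ∧ 1 - δ < f i z ∧ 1 - δ < -g z := fun i => by
    have := hfar _ (neg_mem (hfF i)) (by rw [norm_neg, hf i])
    rw [← norm_neg, neg_add, neg_neg] at this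
    simpa using
      StrongDual.exists_lt_apply_and_lt_apply (hf i).le (by rw [norm_neg]; exact hg.le) this
  choose y hy₁ hyf hyg using hy
  choose z hz₁ hzf hzg using hz
  have hslice : ∀ i, ∀ x : X, 1 - δ < f i x → 1 - α i < f i x := fun i x hx => by
    linarith [hδα i]
  refine ⟨_, ⟨y, fun i => ⟨hy₁ i, hslice i _ (hyf i)⟩, rfl⟩,
    _, ⟨z, fun i => ⟨hz₁ i, hslice i _ (hzf i)⟩, rfl⟩, ?_⟩
  have hsep : 2 - 2 * δ ≤ g (∑ i, lam i • y i - ∑ i, lam i • z i) := by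
    simp only [map_sub, map_sum, map_smul, smul_eq_mul, ← Finset.sum_sub_distrib, ← mul_sub]
    calc 2 - 2 * δ = ∑ i, lam i * (2 - 2 * δ) := by rw [← Finset.sum_mul, hsum, one_mul]
      _ ≤ _ := Finset.sum_le_sum fun i _ =>
        mul_le_mul_of_nonneg_left (by linarith [hyg i, hzg i]) (hlam i)
  calc 2 * 1 - η < 2 - 2 * δ := by linarith
    _ ≤ g (∑ i, lam i • y i - ∑ i, lam i • z i) := hsep
    _ ≤ ‖g‖ * ‖∑ i, lam i • y i - ∑ i, lam i • z i‖ := (Real.le_norm_self _).trans (g.le_opNorm _)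
    _ = dist _ _ := by rw [hg, one_mul, dist_eq_norm]

theorem StrongDiameterTwoProp.exists_forall_lt_norm_add [Nontrivial X]
    (h : StrongDiameterTwoProp X) {n : ℕ} (f : Fin n → StrongDual ℝ X) (hf : ∀ i, ‖f i‖ = 1)
    {δ : ℝ} (hδ : 0 < δ) : ∃ g : StrongDual ℝ X, ‖g‖ = 1 ∧ ∀ i, 2 - δ < ‖f i + g‖ := by
  rcases n.eq_zero_or_pos with rfl | hn
  · obtain ⟨g, hg, -⟩ := exists_dual_vector' ℝ (0 : X)
    exact ⟨g, hg, fun i => i.elim0⟩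
  have hn' : (0 : ℝ) < n := by exact_mod_cast hn
  set η := min δ 1 / (n + 1)
  have hη : 0 < η := by positivity
  have hηδ : (n + 1) * η ≤ δ := by
    rw [mul_div_cancel₀ _ (by positivity)]; exact min_le_left _ _
  have hη₁ : η ≤ 1 := div_le_one_of_le₀ ((min_le_right _ _).trans (by linarith)) (by positivity)
  have hw : ∀ _ : Fin n, (0 : ℝ) ≤ (n : ℝ)⁻¹ := fun _ => by positivity
  have hw₁ : ∑ _ : Fin n, (n : ℝ)⁻¹ = 1 := by simp [hn'.ne']
  have hdiam := h n _ f (fun _ => η) hw hw₁ hf fun _ => hη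
  obtain ⟨_, ⟨y, hy, rfl⟩, _, ⟨w, hw', rfl⟩, hyw⟩ :=
    exists_lt_dist_of_lt_diam (r := 2 - η) (by linarith) (by linarith)
  obtain ⟨g, hg, hgyw⟩ := exists_dual_vector' ℝ (∑ i, (n : ℝ)⁻¹ • y i - ∑ i, (n : ℝ)⁻¹ • w i)
  have hgw : -1 ≤ g (∑ i, (n : ℝ)⁻¹ • w i) := by
    have := (-g).apply_le_norm (norm_sum_smul_le_one hw hw₁ fun i => (hw' i).1)
    rw [norm_neg, hg, neg_apply] at this
    linarith
  have hgy : 1 - η < ∑ j, (n : ℝ)⁻¹ * g (y j) := by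
    rw [dist_eq_norm] at hyw
    simp only [map_sub, map_sum, map_smul, smul_eq_mul, RCLike.ofReal_real_eq_id, id] at hgw hgyw ⊢
    linarith
  refine ⟨g, hg, fun i => ?_⟩
  have hgyi : (n : ℝ)⁻¹ * (1 - g (y i)) < η :=
    (mul_one_sub_le_one_sub_sum_mul hw hw₁ (fun j => (g.apply_le_norm (hy j).1).trans hg.le)
      i).trans_lt (by linarith)
  rw [inv_mul_lt_iff₀ hn'] at hgyi
  calc 2 - δ ≤ 2 - (n + 1) * η := by linarith
    _ < f i (y i) + g (y i) := by linarith [(hy i).2]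
    _ = (f i + g) (y i) := rfl
    _ ≤ ‖f i + g‖ := (f i + g).apply_le_norm (hy i).1

end Dual

theorem stmt_10_general (X : Type*) [NormedAddCommGroup X] [NormedSpace ℝ X] [Nontrivial X] :
    StrongDiameterTwoProp X ↔ Octahedral (StrongDual ℝ X) :=
  ⟨fun h => octahedral_of_forall_exists_lt_norm_add fun _ f hf _ hδ =>
    h.exists_forall_lt_norm_add f hf hδ, StrongDiameterTwoProp.of_octahedral_dual⟩

theorem stmt_10 (X : Type*) [NormedAddCommGroup X] [NormedSpace ℝ X] [CompleteSpace X] [Nontrivial X] :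
    StrongDiameterTwoProp X ↔ Octahedral (StrongDual ℝ X) :=
  stmt_10_general X
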